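/- arXiv:1803.07368 — 2 statements merged into one kernel-verified Lean document; each statement's English description precedes it below -/
import Mathlib

section
/- (Exact DMD modes, as used in the DMD algorithm.) Let X, Y ∈ ℂ^{n×(m-1)}, let X = U_r Σ_r V_r* be a compact rank-r SVD of X (U_r* U_r = I_r, V_r* V_r = I_r, Σ_r invertible diagonal), let A = Y X† and Ã = U_r* Y V_r Σ_r^{-1}. If w ∈ ℂ^r satisfies Ã w = λ w with λ ≠ 0, then the vector φ = Y V_r Σ_r^{-1} w is nonzero and satisfies A φ = λ φ. In particular, every nonzero eigenvalue of Ã is an eigenvalue of the full operator A. -/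
open Matrix

/-- Uniqueness of the Moore–Penrose pseudoinverse. -/
lemma pinv_unique' {α β : Type*} [Fintype α] [Fintype β]
    (X : Matrix α β ℂ) (B C : Matrix β α ℂ)
    (hB1 : X * B * X = X) (hB2 : B * X * B = B)
    (hB3 : (X * B)ᴴ = X * B) (hB4 : (B * X)ᴴ = B * X)
    (hC1 : X * C * X = X) (hC2 : C * X * C = C)
    (hC3 : (X * C)ᴴ = X * C) (hC4 : (C * X)ᴴ = C * X) :
    B = C := by
  have hXB : X * B = X * C := by
    calc X * B = (X * B)ᴴ := hB3.symm
    _ = Bᴴ * Xᴴ := by rw [conjTranspose_mul]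
    _ = Bᴴ * (X * C * X)ᴴ := by rw [hC1]
    _ = Bᴴ * (Xᴴ * (X * C)ᴴ) := by rw [conjTranspose_mul]
    _ = Bᴴ * (Xᴴ * (X * C)) := by rw [hC3]
    _ = (Bᴴ * Xᴴ) * (X * C) := by rw [Matrix.mul_assoc]
    _ = (X * B)ᴴ * (X * C) := by rw [conjTranspose_mul]
    _ = (X * B) * (X * C) := by rw [hB3]
    _ = (X * B * X) * C := by simp only [Matrix.mul_assoc]
    _ = X * C := by rw [hB1]
  have hBX : B * X = C * X := by
    calc B * X = (B * X)ᴴ := hB4.symm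
    _ = Xᴴ * Bᴴ := by rw [conjTranspose_mul]
    _ = (X * (C * X))ᴴ * Bᴴ := by rw [← Matrix.mul_assoc, hC1]
    _ = ((C * X)ᴴ * Xᴴ) * Bᴴ := by rw [conjTranspose_mul]
    _ = ((C * X) * Xᴴ) * Bᴴ := by rw [hC4]
    _ = (C * X) * (Xᴴ * Bᴴ) := by rw [Matrix.mul_assoc]
    _ = (C * X) * (B * X)ᴴ := by rw [conjTranspose_mul]
    _ = (C * X) * (B * X) := by rw [hB4]
    _ = C * (X * B * X) := by simp only [Matrix.mul_assoc]
    _ = C * X := by rw [hB1]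
  calc B = B * X * B := hB2.symm
  _ = B * (X * C) := by rw [Matrix.mul_assoc, hXB]
  _ = (B * X) * C := by rw [Matrix.mul_assoc]
  _ = C * X * C := by rw [hBX, Matrix.mul_assoc]
  _ = C := hC2

/-- Exact DMD modes: if `(μ, w)` is an eigenpair of the reduced operator
`Ã = Urᴴ * Y * Vr * S⁻¹` with `μ ≠ 0`, then `φ = Y * Vr * S⁻¹ *ᵥ w` is nonzero and is
an eigenvector of the full DMD operator `A = Y X†` with the same eigenvalue `μ`. -/
theorem exact_dmd_modes {n m r : ℕ}
    (X Y : Matrix (Fin n) (Fin (m - 1)) ℂ)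
    (Ur : Matrix (Fin n) (Fin r) ℂ)
    (S : Matrix (Fin r) (Fin r) ℂ)
    (Vr : Matrix (Fin (m - 1)) (Fin r) ℂ)
    (hX : X = Ur * S * Vrᴴ)
    (hU : Urᴴ * Ur = 1) (hV : Vrᴴ * Vr = 1)
    (hdiag : S.IsDiag) (hinv : IsUnit S.det)
    (Xd : Matrix (Fin (m - 1)) (Fin n) ℂ)
    (h1 : X * Xd * X = X) (h2 : Xd * X * Xd = Xd)
    (h3 : (X * Xd)ᴴ = X * Xd) (h4 : (Xd * X)ᴴ = Xd * X)
    (A : Matrix (Fin n) (Fin n) ℂ) (hA : A = Y * Xd)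
    (Atil : Matrix (Fin r) (Fin r) ℂ) (hAtil : Atil = Urᴴ * Y * Vr * S⁻¹)
    (μ : ℂ) (hμ : μ ≠ 0)
    (w : Fin r → ℂ) (hw : w ≠ 0) (heig : Atil *ᵥ w = μ • w)
    (φ : Fin n → ℂ) (hφ : φ = (Y * Vr * S⁻¹) *ᵥ w) :
    φ ≠ 0 ∧ A *ᵥ φ = μ • φ := by
  have hS₁ : ∀ (γ : Type) [Fintype γ] (Z : Matrix (Fin r) γ ℂ), S * (S⁻¹ * Z) = Z := by
    intro γ _ Z
    rw [← Matrix.mul_assoc, mul_nonsing_inv S hinv, Matrix.one_mul]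
  have hS₂ : ∀ (γ : Type) [Fintype γ] (Z : Matrix (Fin r) γ ℂ), S⁻¹ * (S * Z) = Z := by
    intro γ _ Z
    rw [← Matrix.mul_assoc, nonsing_inv_mul S hinv, Matrix.one_mul]
  have hV' : ∀ (γ : Type) [Fintype γ] (Z : Matrix (Fin r) γ ℂ), Vrᴴ * (Vr * Z) = Z := by
    intro γ _ Z; rw [← Matrix.mul_assoc, hV, Matrix.one_mul]
  have hU' : ∀ (γ : Type) [Fintype γ] (Z : Matrix (Fin r) γ ℂ), Urᴴ * (Ur * Z) = Z := by
    intro γ _ Z; rw [← Matrix.mul_assoc, hU, Matrix.one_mul]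
  set P : Matrix (Fin (m - 1)) (Fin n) ℂ := Vr * S⁻¹ * Urᴴ with hP
  have hXP : X * P = Ur * Urᴴ := by
    rw [hX, hP]
    simp only [Matrix.mul_assoc, hV' _, hS₁ _]
  have hPX : P * X = Vr * Vrᴴ := by
    rw [hX, hP]
    simp only [Matrix.mul_assoc, hU' _, hS₂ _]
  have hC1 : X * P * X = X := by
    rw [hXP, hX]; simp only [Matrix.mul_assoc, hU' _]
  have hC3 : (X * P)ᴴ = X * P := by
    rw [hXP, conjTranspose_mul, conjTranspose_conjTranspose]
  have hC4 : (P * X)ᴴ = P * X := by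
    rw [hPX, conjTranspose_mul, conjTranspose_conjTranspose]
  have hC2 : P * X * P = P := by
    rw [hPX, hP]; simp only [Matrix.mul_assoc, hV' _]
  have hXd : Xd = P := pinv_unique' X Xd P h1 h2 h3 h4 hC1 hC2 hC3 hC4
  have key : A * (Y * Vr * S⁻¹) = (Y * Vr * S⁻¹) * Atil := by
    rw [hA, hXd, hP, hAtil]
    simp only [Matrix.mul_assoc]
  have hAφ : A *ᵥ φ = μ • φ := by
    rw [hφ, mulVec_mulVec, key, ← mulVec_mulVec, heig, mulVec_smul]
  refine ⟨?_, hAφ⟩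
  intro h0
  have : Urᴴ *ᵥ φ = μ • w := by
    rw [hφ, mulVec_mulVec, ← Matrix.mul_assoc, ← Matrix.mul_assoc, ← hAtil]
    · exact heig
  rw [h0, mulVec_zero] at this
  exact hw (by simpa [hμ] using (smul_eq_zero.mp this.symm).resolve_left hμ)
end

section
/- Let X, Y ∈ ℂ^{n×(m-1)}, let X = U_r Σ_r V_r* be a compact rank-r SVD of X (U_r* U_r = I_r, V_r* V_r = I_r, Σ_r invertible diagonal), let A = Y X† and Ã = U_r* Y V_r Σ_r^{-1}, and suppose Ã w = λ w with λ ≠ 0 and φ = Y V_r Σ_r^{-1} w. Then the exact DMD mode φ lies in the column space of Y, and its projection onto the column space of U_r satisfies U_r* φ = λ w; consequently φ determines the corresponding 'projected' mode U_r w up to the nonzero factor λ. -/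
open Matrix

/-- The exact DMD mode `φ = Y * Vr * S⁻¹ *ᵥ w` associated with an eigenpair `(μ, w)`,
`μ ≠ 0`, of the reduced operator `Ã = Urᴴ * Y * Vr * S⁻¹` lies in the column space of `Y`,
satisfies `Urᴴ *ᵥ φ = μ • w`, and hence its projection onto the column space of `Ur`
is the projected mode `Ur *ᵥ w` scaled by the nonzero factor `μ`. -/
theorem exact_mode_projection {n m r : ℕ}
    (X Y : Matrix (Fin n) (Fin (m - 1)) ℂ)
    (Ur : Matrix (Fin n) (Fin r) ℂ)
    (S : Matrix (Fin r) (Fin r) ℂ)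
    (Vr : Matrix (Fin (m - 1)) (Fin r) ℂ)
    (hX : X = Ur * S * Vrᴴ)
    (hU : Urᴴ * Ur = 1) (hV : Vrᴴ * Vr = 1)
    (hdiag : S.IsDiag) (hinv : IsUnit S.det)
    (Xd : Matrix (Fin (m - 1)) (Fin n) ℂ)
    (h1 : X * Xd * X = X) (h2 : Xd * X * Xd = Xd)
    (h3 : (X * Xd)ᴴ = X * Xd) (h4 : (Xd * X)ᴴ = Xd * X)
    (A : Matrix (Fin n) (Fin n) ℂ) (hA : A = Y * Xd)
    (Atil : Matrix (Fin r) (Fin r) ℂ) (hAtil : Atil = Urᴴ * Y * Vr * S⁻¹)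
    (μ : ℂ) (hμ : μ ≠ 0)
    (w : Fin r → ℂ) (hw : w ≠ 0) (heig : Atil *ᵥ w = μ • w)
    (φ : Fin n → ℂ) (hφ : φ = (Y * Vr * S⁻¹) *ᵥ w) :
    (∃ v : Fin (m - 1) → ℂ, φ = Y *ᵥ v) ∧
    Urᴴ *ᵥ φ = μ • w ∧
    Ur *ᵥ (Urᴴ *ᵥ φ) = μ • (Ur *ᵥ w) := by
  have hproj : Urᴴ *ᵥ φ = μ • w := by
    rw [hφ, mulVec_mulVec, ← Matrix.mul_assoc, ← Matrix.mul_assoc, ← hAtil, heig]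
  refine ⟨⟨(Vr * S⁻¹) *ᵥ w, by simp [hφ, mulVec_mulVec, Matrix.mul_assoc]⟩, hproj, ?_⟩
  rw [hproj, mulVec_smul]
end
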